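/- Let f be a probability density on (0,1) satisfying 0 < c_f ≤ f(t) ≤ C_f for all t ∈ (0,1). (a) There exist constants c₁ > 0 and δ > 0, depending only on c_f and C_f, such that for all n ≥ 1, all integers m ≥ 2, and all h with m·h ≥ δ: if (t_{i,j}), i = 1,…,n, j = 1,…,m, are i.i.d. with density f and Ñ_h = #{(i,j) : 1 ≤ i ≤ n, 1 ≤ j ≤ m−1, t_{i,(j+1)} − t_{i,(j)} < h}, then c₁·n·m ≤ E[Ñ_h] ≤ n·(m−1). (b) Moreover, for sequences m_n → ∞ and h_n > 0 with c_f·m_n·h_n − log(m_n·n) → ∞ as n → ∞, one has P(Ñ_{h_n} = n·(m_n − 1)) → 1, i.e., with probability tending to one every consecutive spacing of every individual is smaller than h_n. -/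

import Mathlib

/-!
(a) The samples lie in `(0,1)` almost surely, so the `m - 1` spacings of an individual sum to
less than `1` and at most `1 / h ≤ m / 4` of them are `≥ h`. Hence
`Ñ_h ≥ n (m - 1 - m / 4) ≥ n m / 4` pointwise, and the bound passes to the expectation.

(b) If some spacing of individual `i` is `≥ h`, then some sample `t_{i,k}` is followed by an empty
window `(t_{i,k}, t_{i,k} + h) ⊆ (0,1)`. Given `t_{i,k}`, the other `m - 1` samples of that
individual miss the window independently, each with probability at most `1 - c_f h ≤ exp (-c_f h)`.
A union bound over `(i, k)` gives `P(Ñ_h ≠ n (m - 1)) ≤ n m exp (-c_f h (m - 1))`, which is at most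
`exp (c_f - (c_f m h - log (m n)))` when `h < 1`; when `h ≥ 1` no window fits in `(0,1)`.
-/

open MeasureTheory ProbabilityTheory Filter
open scoped ENNReal

/-- The `j`-th order statistic (0-indexed) of the tuple `v`. -/
noncomputable def sortedVal {m : ℕ} (v : Fin m → ℝ) (j : ℕ) : ℝ :=
  if h : j < m then v (Tuple.sort v ⟨j, h⟩) else 0

/-- `Ñ_h`: the number of pairs `(i, j)`, `1 ≤ i ≤ n`, `1 ≤ j ≤ m - 1`, such that the
consecutive order-statistic spacing `t_{i,(j+1)} - t_{i,(j)}` is smaller than `h`. -/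
noncomputable def spacingCount (n m : ℕ) (T : Fin n → Fin m → ℝ) (h : ℝ) : ℝ :=
  ∑ i : Fin n, ∑ j ∈ Finset.range (m - 1),
    if sortedVal (fun k => T i k) (j + 1) - sortedVal (fun k => T i k) j < h then (1 : ℝ) else 0

section OrderStatistics

variable {m : ℕ} (v : Fin m → ℝ)

lemma sortedVal_of_lt {j : ℕ} (hj : j < m) : sortedVal v j = v (Tuple.sort v ⟨j, hj⟩) :=
  dif_pos hj

lemma sortedVal_mono {i j : ℕ} (hij : i ≤ j) (hj : j < m) : sortedVal v i ≤ sortedVal v j := by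
  rw [sortedVal_of_lt v (hij.trans_lt hj), sortedVal_of_lt v hj]
  exact Tuple.monotone_sort v (Fin.mk_le_mk.2 hij)

lemma sortedVal_mem {s : Set ℝ} (hv : ∀ k, v k ∈ s) {j : ℕ} (hj : j < m) : sortedVal v j ∈ s := by
  rw [sortedVal_of_lt v hj]
  exact hv _

lemma apply_notMem_Ioo_sortedVal {j : ℕ} (hj : j + 1 < m) (l : Fin m) :
    v l ∉ Set.Ioo (sortedVal v j) (sortedVal v (j + 1)) := by
  rintro ⟨hlo, hhi⟩
  set p := (Tuple.sort v).symm l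
  have hl : v l = sortedVal v p := by
    rw [sortedVal_of_lt v p.isLt, Fin.eta, Equiv.apply_symm_apply]
  rw [hl] at hlo hhi
  rcases le_or_gt (p : ℕ) j with hpj | hjp
  · exact (sortedVal_mono v hpj (by omega)).not_gt hlo
  · exact (sortedVal_mono v (Nat.succ_le_of_lt hjp) p.isLt).not_gt hhi

lemma sortedVal_le_iff {j : ℕ} (hj : j < m) (x : ℝ) :
    sortedVal v j ≤ x ↔ j < (Finset.univ.filter fun k => v k ≤ x).card := by
  have hcard : (Finset.univ.filter fun k => v k ≤ x).card
      = (Finset.univ.filter fun p => (v ∘ Tuple.sort v) p ≤ x).card :=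
    Finset.card_bij' (fun k _ => (Tuple.sort v).symm k) (fun p _ => Tuple.sort v p)
      (by simp) (by simp) (by simp) (by simp)
  rw [hcard, sortedVal_of_lt v hj]
  exact (Tuple.lt_card_le_iff_apply_le_of_monotone (j := ⟨j, hj⟩) (Tuple.monotone_sort v)).symm

lemma measurable_sortedVal (j : ℕ) : Measurable fun v : Fin m → ℝ => sortedVal v j := by
  by_cases hj : j < m
  · refine measurable_of_Iic fun x => ?_
    have hpre : (fun v : Fin m → ℝ => sortedVal v j) ⁻¹' Set.Iic x
        = {v | j < ∑ k, if v k ≤ x then 1 else 0} := by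
      ext v
      simp only [Set.mem_preimage, Set.mem_Iic, sortedVal_le_iff v hj x, Finset.card_filter]
      rfl
    rw [hpre]
    exact measurableSet_lt measurable_const
      (Finset.measurable_sum _ fun k _ => Measurable.ite (measurableSet_le (measurable_pi_apply k)
        measurable_const) measurable_const measurable_const)
  · simp only [sortedVal, dif_neg hj, measurable_const]

end OrderStatistics

noncomputable def rowSpacingCount {m : ℕ} (v : Fin m → ℝ) (h : ℝ) : ℝ :=
  ∑ j ∈ Finset.range (m - 1), if sortedVal v (j + 1) - sortedVal v j < h then (1 : ℝ) else 0

section RowSpacingCount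

variable {m : ℕ} (v : Fin m → ℝ) (h : ℝ)

lemma spacingCount_eq_sum_rowSpacingCount {n : ℕ} (T : Fin n → Fin m → ℝ) :
    spacingCount n m T h = ∑ i, rowSpacingCount (T i) h :=
  rfl

lemma rowSpacingCount_le : rowSpacingCount v h ≤ (m - 1 : ℕ) := by
  calc rowSpacingCount v h ≤ ∑ _j ∈ Finset.range (m - 1), (1 : ℝ) :=
        Finset.sum_le_sum fun j _ => by split <;> norm_num
    _ = (m - 1 : ℕ) := by simp

lemma rowSpacingCount_eq_of_forall_lt
    (hlt : ∀ j, j + 1 < m → sortedVal v (j + 1) - sortedVal v j < h) :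
    rowSpacingCount v h = (m - 1 : ℕ) := by
  rw [rowSpacingCount, Finset.sum_congr rfl fun j hj => if_pos (hlt j (by simp at hj; omega))]
  simp

lemma card_sub_div_le_rowSpacingCount {a b : ℝ} (hm : 0 < m) (hv : ∀ k, v k ∈ Set.Icc a b)
    (hh : 0 < h) : ((m - 1 : ℕ) : ℝ) - (b - a) / h ≤ rowSpacingCount v h := by
  set gap : ℕ → ℝ := fun j => sortedVal v (j + 1) - sortedVal v j
  set wide := (Finset.range (m - 1)).filter fun j => ¬ gap j < h
  have hwide : (wide.card : ℝ) * h ≤ b - a := by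
    have htel : ∑ j ∈ Finset.range (m - 1), gap j = sortedVal v (m - 1) - sortedVal v 0 :=
      Finset.sum_range_sub (sortedVal v) (m - 1)
    have hgap : ∀ j ∈ Finset.range (m - 1), 0 ≤ gap j := fun j hj =>
      sub_nonneg.2 (sortedVal_mono v j.le_succ (by simp at hj; omega))
    calc (wide.card : ℝ) * h = ∑ _j ∈ wide, h := by simp
      _ ≤ ∑ j ∈ wide, gap j := Finset.sum_le_sum fun j hj => not_lt.1 (Finset.mem_filter.1 hj).2
      _ ≤ ∑ j ∈ Finset.range (m - 1), gap j :=
          Finset.sum_le_sum_of_subset_of_nonneg (Finset.filter_subset _ _)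
            fun j hj _ => hgap j hj
      _ ≤ b - a := by
          rw [htel]
          linarith [(sortedVal_mem v hv (Nat.sub_lt hm one_pos)).2, (sortedVal_mem v hv hm).1]
  have hsplit : rowSpacingCount v h + wide.card = (m - 1 : ℕ) := by
    rw [rowSpacingCount, Finset.sum_boole, ← Nat.cast_add,
      Finset.card_filter_add_card_filter_not, Finset.card_range]
  have : (wide.card : ℝ) ≤ (b - a) / h := by rwa [le_div_iff₀ hh]
  linarith

lemma exists_empty_window_of_rowSpacingCount_ne {a b : ℝ} (hv : ∀ k, v k ∈ Set.Ioo a b)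
    (hne : rowSpacingCount v h ≠ (m - 1 : ℕ)) :
    ∃ k, v k ∈ Set.Ioo a (b - h) ∧ ∀ l, v l ∉ Set.Ioo (v k) (v k + h) := by
  obtain ⟨j, hj, hwide⟩ : ∃ j, j + 1 < m ∧ h ≤ sortedVal v (j + 1) - sortedVal v j := by
    by_contra! hall
    exact hne (rowSpacingCount_eq_of_forall_lt v h hall)
  have hk := sortedVal_of_lt v (show j < m by omega)
  refine ⟨Tuple.sort v ⟨j, by omega⟩, ?_, fun l hl => ?_⟩
  · rw [← hk]
    have := (sortedVal_mem v hv hj).2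
    exact ⟨(sortedVal_mem v hv (by omega)).1, by linarith⟩
  · rw [← hk] at hl
    exact apply_notMem_Ioo_sortedVal v hj l ⟨hl.1, by linarith [hl.2]⟩

end RowSpacingCount

section SpacingCount

variable {n m : ℕ} (T : Fin n → Fin m → ℝ) (h : ℝ)

lemma spacingCount_le (hm : 0 < m) : spacingCount n m T h ≤ n * ((m : ℝ) - 1) := by
  calc spacingCount n m T h ≤ ∑ _i : Fin n, ((m - 1 : ℕ) : ℝ) :=
        Finset.sum_le_sum fun i _ => rowSpacingCount_le (T i) h
    _ = n * ((m : ℝ) - 1) := by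
      rw [Finset.sum_const, Finset.card_univ, Fintype.card_fin, nsmul_eq_mul, Nat.cast_pred hm]

lemma mul_sub_div_le_spacingCount {a b : ℝ} (hm : 0 < m) (hT : ∀ i k, T i k ∈ Set.Icc a b)
    (hh : 0 < h) : n * ((m : ℝ) - 1 - (b - a) / h) ≤ spacingCount n m T h := by
  calc n * ((m : ℝ) - 1 - (b - a) / h) = ∑ _i : Fin n, (((m - 1 : ℕ) : ℝ) - (b - a) / h) := by
        rw [Finset.sum_const, Finset.card_univ, Fintype.card_fin, nsmul_eq_mul, Nat.cast_pred hm]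
    _ ≤ spacingCount n m T h :=
        Finset.sum_le_sum fun i _ => card_sub_div_le_rowSpacingCount (T i) h hm (hT i) hh

lemma exists_empty_window_of_spacingCount_ne {a b : ℝ} (hm : 0 < m)
    (hT : ∀ i k, T i k ∈ Set.Ioo a b) (hne : spacingCount n m T h ≠ n * ((m : ℝ) - 1)) :
    ∃ i k, T i k ∈ Set.Ioo a (b - h) ∧ ∀ l, T i l ∉ Set.Ioo (T i k) (T i k + h) := by
  by_contra! hnone
  refine hne ?_
  rw [spacingCount_eq_sum_rowSpacingCount]
  calc ∑ i, rowSpacingCount (T i) h = ∑ _i : Fin n, ((m - 1 : ℕ) : ℝ) := by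
        refine Finset.sum_congr rfl fun i _ => ?_
        by_contra hi
        obtain ⟨k, hk, hl⟩ := exists_empty_window_of_rowSpacingCount_ne (T i) h (hT i) hi
        obtain ⟨l, hl'⟩ := hnone i k hk
        exact hl l hl'
    _ = n * ((m : ℝ) - 1) := by
      rw [Finset.sum_const, Finset.card_univ, Fintype.card_fin, nsmul_eq_mul, Nat.cast_pred hm]

lemma measurable_spacingCount :
    Measurable fun T : Fin n → Fin m → ℝ => spacingCount n m T h := by
  refine Finset.measurable_sum _ fun i _ => Finset.measurable_sum _ fun j _ =>
    Measurable.ite (measurableSet_lt (Measurable.sub ?_ ?_) measurable_const)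
      measurable_const measurable_const
  all_goals exact (measurable_sortedVal _).comp (measurable_pi_apply i)

lemma spacingCount_nonneg : 0 ≤ spacingCount n m T h :=
  Finset.sum_nonneg fun i _ => Finset.sum_nonneg fun j _ => by split <;> norm_num

end SpacingCount

lemma mul_exp_neg_pow_le {c h : ℝ} (hc : 0 ≤ c) (hh : h ≤ 1) (n : ℕ) {m : ℕ} (hm : 0 < m) :
    n * m * Real.exp (-(c * h)) ^ (m - 1) ≤ Real.exp (c - (c * m * h - Real.log (m * n))) := by
  have hpow : Real.exp (-(c * h)) ^ (m - 1) ≤ Real.exp (c - c * m * h) := by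
    rw [← Real.exp_nat_mul, Nat.cast_pred hm]
    exact Real.exp_le_exp.2 (by nlinarith [mul_le_mul_of_nonneg_left hh hc])
  calc (n : ℝ) * m * Real.exp (-(c * h)) ^ (m - 1)
      ≤ Real.exp (Real.log (m * n)) * Real.exp (c - c * m * h) := by
        gcongr
        simpa [mul_comm] using Real.le_exp_log ((m : ℝ) * n)
    _ = Real.exp (c - (c * m * h - Real.log (m * n))) := by rw [← Real.exp_add]; ring_nf

lemma tendsto_measure_of_measure_compl_le {ι : Type*} {l : Filter ι} {Ω : ι → Type*}
    [∀ i, MeasurableSpace (Ω i)] {P : ∀ i, Measure (Ω i)} [∀ i, IsProbabilityMeasure (P i)]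
    {s : ∀ i, Set (Ω i)} {ε : ι → ℝ≥0∞} (hε : Tendsto ε l (nhds 0))
    (hs : ∀ᶠ i in l, P i (s i)ᶜ ≤ ε i) : Tendsto (fun i => P i (s i)) l (nhds 1) := by
  have hlow : Tendsto (fun i => 1 - ε i) l (nhds 1) := by
    simpa using ENNReal.Tendsto.sub tendsto_const_nhds hε (Or.inl ENNReal.one_ne_top)
  refine tendsto_of_tendsto_of_tendsto_of_le_of_le' hlow tendsto_const_nhds ?_
    (Eventually.of_forall fun i => prob_le_one)
  filter_upwards [hs] with i hi
  calc 1 - ε i ≤ 1 - P i (s i)ᶜ := tsub_le_tsub_left hi 1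
    _ ≤ P i (s i) := tsub_le_iff_right.2 (by simpa using measure_univ_le_add_compl (μ := P i) (s i))

lemma ofReal_mul_le_withDensity_Ioo {f : ℝ → ℝ} {s : Set ℝ} {c : ℝ} (hc : 0 ≤ c)
    (hfs : ∀ y ∈ s, c ≤ f y) {x h : ℝ} (hxs : Set.Ioo x (x + h) ⊆ s) :
    ENNReal.ofReal (c * h)
      ≤ volume.withDensity (fun y => ENNReal.ofReal (f y)) (Set.Ioo x (x + h)) := by
  rw [withDensity_apply _ measurableSet_Ioo]
  calc ENNReal.ofReal (c * h) = ∫⁻ _ in Set.Ioo x (x + h), ENNReal.ofReal c := by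
        rw [setLIntegral_const, Real.volume_Ioo, add_sub_cancel_left, ENNReal.ofReal_mul hc]
    _ ≤ _ := setLIntegral_mono' measurableSet_Ioo fun y hy =>
        ENNReal.ofReal_le_ofReal (hfs y (hxs hy))

lemma measure_compl_le_exp_neg {α : Type*} [MeasurableSpace α] {μ : Measure α}
    [IsProbabilityMeasure μ] {s : Set α} (hs : MeasurableSet s) {t : ℝ} (ht : 0 ≤ t)
    (hμs : ENNReal.ofReal t ≤ μ s) : μ sᶜ ≤ ENNReal.ofReal (Real.exp (-t)) := by
  calc μ sᶜ = 1 - μ s := prob_compl_eq_one_sub hs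
    _ ≤ 1 - ENNReal.ofReal t := tsub_le_tsub_left hμs 1
    _ = ENNReal.ofReal (1 - t) := by rw [ENNReal.ofReal_sub 1 ht, ENNReal.ofReal_one]
    _ ≤ ENNReal.ofReal (Real.exp (-t)) :=
        ENNReal.ofReal_le_ofReal (by linarith [Real.add_one_le_exp (-t)])

section Probability

variable {Ω : Type*} [MeasurableSpace Ω] {P : Measure Ω}

lemma ae_mem_of_map_eq_withDensity {X : Ω → ℝ} (hX : AEMeasurable X P) {f : ℝ → ℝ}
    (hf : Measurable f) {s : Set ℝ} (hf0 : ∀ x ∉ s, f x = 0)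
    (hlaw : P.map X = volume.withDensity fun x => ENNReal.ofReal (f x)) :
    ∀ᵐ ω ∂P, X ω ∈ s := by
  refine ae_of_ae_map hX ?_
  rw [hlaw, ae_withDensity_iff hf.ennreal_ofReal]
  exact ae_of_all _ fun x hx => by_contra fun hxs => hx (by simp [hf0 x hxs])

variable [IsProbabilityMeasure P]

lemma measure_empty_window_le {ι : Type*} [Fintype ι] [DecidableEq ι]
    {μ : Measure ℝ} {Y : ι → Ω → ℝ} (hY : ∀ l, Measurable (Y l)) (hind : iIndepFun Y P)
    (hlaw : ∀ l, P.map (Y l) = μ) {A : Set ℝ} (hA : MeasurableSet A) {h : ℝ} {q : ℝ≥0∞}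
    (hq : ∀ x ∈ A, μ (Set.Ioo x (x + h))ᶜ ≤ q) (k : ι) :
    P {ω | Y k ω ∈ A ∧ ∀ l, Y l ω ∉ Set.Ioo (Y k ω) (Y k ω + h)}
      ≤ q ^ (Fintype.card ι - 1) := by
  set R := Finset.univ.erase k
  set V : Ω → R → ℝ := fun ω l => Y l ω
  have hV : Measurable V := measurable_pi_lambda _ fun l => hY l
  have hμ : IsProbabilityMeasure μ := hlaw k ▸ Measure.isProbabilityMeasure_map (hY k).aemeasurable
  have hjoint : P.map (fun ω => (Y k ω, V ω)) = μ.prod (Measure.pi fun _ : R => μ) := by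
    have hkV : IndepFun (Y k) V P :=
      (hind.indepFun_finset {k} R (by simp [R]) hY).comp
        (measurable_pi_apply (⟨k, Finset.mem_singleton_self k⟩ : ({k} : Finset ι)))
        measurable_id
    have hVlaw : P.map V = Measure.pi fun _ : R => μ := by
      rw [(iIndepFun_iff_map_fun_eq_pi_map fun l : R => (hY l).aemeasurable).1
        (hind.precomp (g := ((↑) : R → ι)) Subtype.val_injective)]
      simp only [hlaw]
    rw [(indepFun_iff_map_prod_eq_prod_map_map (hY k).aemeasurable hV.aemeasurable).1 hkV,
      hlaw k, hVlaw]
  set S : Set (ℝ × (R → ℝ)) := {p | p.1 ∈ A ∧ ∀ l, p.2 l ∉ Set.Ioo p.1 (p.1 + h)}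
  have hS : MeasurableSet S := by measurability
  have hslice : ∀ x, Measure.pi (fun _ : R => μ) (Prod.mk x ⁻¹' S) ≤ q ^ (Fintype.card ι - 1) := by
    intro x
    by_cases hx : x ∈ A
    · calc Measure.pi (fun _ : R => μ) (Prod.mk x ⁻¹' S)
            ≤ Measure.pi (fun _ : R => μ) (Set.univ.pi fun _ => (Set.Ioo x (x + h))ᶜ) :=
            measure_mono fun w hw l _ => hw.2 l
        _ = μ (Set.Ioo x (x + h))ᶜ ^ R.card := by simp [Measure.pi_pi]
        _ ≤ q ^ (Fintype.card ι - 1) := by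
            rw [Finset.card_erase_of_mem (Finset.mem_univ k), Finset.card_univ]
            exact pow_le_pow_left' (hq x hx) _
    · have : Prod.mk x ⁻¹' S = ∅ := Set.eq_empty_of_forall_notMem fun w hw => hx hw.1
      simp [this]
  calc P {ω | Y k ω ∈ A ∧ ∀ l, Y l ω ∉ Set.Ioo (Y k ω) (Y k ω + h)}
      ≤ P ((fun ω => (Y k ω, V ω)) ⁻¹' S) := measure_mono fun ω hω => ⟨hω.1, fun l => hω.2 l⟩
    _ ≤ P.map (fun ω => (Y k ω, V ω)) S := Measure.le_map_apply ((hY k).prodMk hV).aemeasurable S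
    _ = ∫⁻ x, Measure.pi (fun _ : R => μ) (Prod.mk x ⁻¹' S) ∂μ := by
        rw [hjoint, Measure.prod_apply hS]
    _ ≤ ∫⁻ _, q ^ (Fintype.card ι - 1) ∂μ := lintegral_mono hslice
    _ = q ^ (Fintype.card ι - 1) := by simp

variable {n m : ℕ} {T : Fin n → Fin m → Ω → ℝ}

lemma integral_spacingCount_bounds (hT : ∀ i k, Measurable (T i k)) {a b : ℝ}
    (hmem : ∀ᵐ ω ∂P, ∀ i k, T i k ω ∈ Set.Icc a b) (hm : 0 < m) {h : ℝ} (hh : 0 < h) :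
    n * ((m : ℝ) - 1 - (b - a) / h) ≤ ∫ ω, spacingCount n m (fun i k => T i k ω) h ∂P ∧
      ∫ ω, spacingCount n m (fun i k => T i k ω) h ∂P ≤ n * ((m : ℝ) - 1) := by
  have hint : Integrable (fun ω => spacingCount n m (fun i k => T i k ω) h) P := by
    refine .of_bound ((measurable_spacingCount h).comp
      (measurable_pi_lambda _ fun i => measurable_pi_lambda _ (hT i))).aestronglyMeasurable
      (n * ((m : ℝ) - 1)) (ae_of_all _ fun ω => ?_)
    rw [Real.norm_of_nonneg (spacingCount_nonneg _ h)]
    exact spacingCount_le _ h hm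
  constructor
  · simpa using integral_mono_ae (integrable_const _) hint
      (hmem.mono fun ω hω => mul_sub_div_le_spacingCount _ h hm hω hh)
  · simpa using integral_mono hint (integrable_const _) fun ω => spacingCount_le _ h hm

lemma measure_spacingCount_ne_le {μ : Measure ℝ} (hT : ∀ i k, Measurable (T i k))
    (hind : iIndepFun (fun (p : Fin n × Fin m) ω => T p.1 p.2 ω) P)
    (hlaw : ∀ i k, P.map (T i k) = μ) {a b : ℝ} (hmem : ∀ᵐ ω ∂P, ∀ i k, T i k ω ∈ Set.Ioo a b)
    (hm : 0 < m) {h : ℝ} {q : ℝ≥0∞} (hq : ∀ x ∈ Set.Ioo a (b - h), μ (Set.Ioo x (x + h))ᶜ ≤ q) :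
    P {ω | spacingCount n m (fun i k => T i k ω) h = n * ((m : ℝ) - 1)}ᶜ
      ≤ n * m * q ^ (m - 1) := by
  set E : Fin n → Fin m → Set Ω := fun i k =>
    {ω | T i k ω ∈ Set.Ioo a (b - h) ∧ ∀ l, T i l ω ∉ Set.Ioo (T i k ω) (T i k ω + h)}
  have hsub : {ω | spacingCount n m (fun i k => T i k ω) h = n * ((m : ℝ) - 1)}ᶜ
      ⊆ {ω | ∀ i k, T i k ω ∈ Set.Ioo a b}ᶜ ∪ ⋃ i, ⋃ k, E i k := by
    intro ω hω
    by_cases hin : ∀ i k, T i k ω ∈ Set.Ioo a b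
    · obtain ⟨i, k, hk⟩ := exists_empty_window_of_spacingCount_ne _ h hm hin hω
      exact Or.inr (Set.mem_iUnion₂.2 ⟨i, k, hk⟩)
    · exact Or.inl hin
  have hE : ∀ i k, P (E i k) ≤ q ^ (m - 1) := fun i k => by
    have hrow : iIndepFun (T i) P := hind.precomp (g := Prod.mk i) (Prod.mk_right_injective i)
    simpa only [Fintype.card_fin] using
      measure_empty_window_le (hT i) hrow (hlaw i) measurableSet_Ioo hq k
  calc P {ω | spacingCount n m (fun i k => T i k ω) h = n * ((m : ℝ) - 1)}ᶜ
      ≤ P {ω | ∀ i k, T i k ω ∈ Set.Ioo a b}ᶜ + P (⋃ i, ⋃ k, E i k) :=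
        (measure_mono hsub).trans (measure_union_le _ _)
    _ ≤ 0 + ∑ _i : Fin n, ∑ _k : Fin m, q ^ (m - 1) := by
        gcongr
        · exact (ae_iff.1 hmem).le
        · exact (measure_iUnion_fintype_le _ _).trans (Finset.sum_le_sum fun i _ =>
            (measure_iUnion_fintype_le _ _).trans (Finset.sum_le_sum fun k _ => hE i k))
    _ = n * m * q ^ (m - 1) := by simp [mul_assoc]

lemma measure_spacingCount_ne_le_exp {f : ℝ → ℝ} (hf : Measurable f) {c : ℝ} (hc : 0 ≤ c)
    (hfc : ∀ x ∈ Set.Ioo (0 : ℝ) 1, c ≤ f x) (hf0 : ∀ x ∉ Set.Ioo (0 : ℝ) 1, f x = 0)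
    (hT : ∀ i k, Measurable (T i k))
    (hind : iIndepFun (fun (p : Fin n × Fin m) ω => T p.1 p.2 ω) P)
    (hlaw : ∀ i k, P.map (T i k) = volume.withDensity fun x => ENNReal.ofReal (f x))
    (hn : 0 < n) (hm : 2 ≤ m) {h : ℝ} (hh : 0 ≤ h) :
    P {ω | spacingCount n m (fun i k => T i k ω) h = n * ((m : ℝ) - 1)}ᶜ
      ≤ ENNReal.ofReal (Real.exp (c - (c * m * h - Real.log (m * n)))) := by
  have : IsProbabilityMeasure (volume.withDensity fun x => ENNReal.ofReal (f x)) :=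
    hlaw ⟨0, hn⟩ ⟨0, by omega⟩ ▸ Measure.isProbabilityMeasure_map (hT _ _).aemeasurable
  have hmem : ∀ᵐ ω ∂P, ∀ i k, T i k ω ∈ Set.Ioo 0 1 := ae_all_iff.2 fun i => ae_all_iff.2 fun k =>
    ae_mem_of_map_eq_withDensity (hT i k).aemeasurable hf hf0 (hlaw i k)
  rcases lt_or_ge h 1 with hh1 | hh1
  · refine (measure_spacingCount_ne_le hT hind hlaw hmem (by omega)
      (q := ENNReal.ofReal (Real.exp (-(c * h)))) fun x hx => ?_).trans ?_
    · exact measure_compl_le_exp_neg measurableSet_Ioo (by positivity)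
        (ofReal_mul_le_withDensity_Ioo hc hfc (Set.Ioo_subset_Ioo hx.1.le (by linarith [hx.2])))
    · rw [← ENNReal.ofReal_natCast, ← ENNReal.ofReal_natCast, ← ENNReal.ofReal_pow (by positivity),
        ← ENNReal.ofReal_mul (by positivity), ← ENNReal.ofReal_mul (by positivity)]
      exact ENNReal.ofReal_le_ofReal (mul_exp_neg_pow_le hc hh1.le n (by omega))
  · refine (measure_spacingCount_ne_le hT hind hlaw hmem (by omega) (q := 0)
      fun x hx => absurd hx.2 (by linarith [hx.1])).trans ?_
    simp [zero_pow (show m - 1 ≠ 0 by omega)]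

end Probability

theorem statement3_general (cf Cf : ℝ) (hcf : 0 < cf) :
    (∃ c₁ δ : ℝ, 0 < c₁ ∧ 0 < δ ∧
      ∀ (f : ℝ → ℝ), Measurable f →
        (∀ x ∈ Set.Ioo (0 : ℝ) 1, cf ≤ f x ∧ f x ≤ Cf) →
        (∀ x, x ∉ Set.Ioo (0 : ℝ) 1 → f x = 0) →
        ∀ (n : ℕ), 1 ≤ n → ∀ (m : ℕ), 2 ≤ m → ∀ (h : ℝ), 0 < h → δ ≤ (m : ℝ) * h →
        ∀ (Ω : Type) (_ : MeasurableSpace Ω) (P : Measure Ω), IsProbabilityMeasure P →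
        ∀ (T : Fin n → Fin m → Ω → ℝ),
          (∀ i j, Measurable (T i j)) →
          iIndepFun
            (fun (p : Fin n × Fin m) ω => T p.1 p.2 ω) P →
          (∀ i j, Measure.map (T i j) P
              = volume.withDensity (fun x => ENNReal.ofReal (f x))) →
          c₁ * n * m ≤ ∫ ω, spacingCount n m (fun i k => T i k ω) h ∂P ∧
            ∫ ω, spacingCount n m (fun i k => T i k ω) h ∂P ≤ (n : ℝ) * (m - 1)) ∧
    (∀ (f : ℝ → ℝ), Measurable f →
        (∀ x ∈ Set.Ioo (0 : ℝ) 1, cf ≤ f x ∧ f x ≤ Cf) →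
        (∀ x, x ∉ Set.Ioo (0 : ℝ) 1 → f x = 0) →
        ∀ (msec : ℕ → ℕ) (hsec : ℕ → ℝ),
        Tendsto msec atTop atTop → (∀ n, 0 < hsec n) →
        Tendsto (fun n : ℕ => cf * msec n * hsec n - Real.log (msec n * n)) atTop atTop →
        ∀ (Ω : ℕ → Type) (_ : ∀ n, MeasurableSpace (Ω n)) (P : ∀ n, Measure (Ω n)),
        (∀ n, IsProbabilityMeasure (P n)) →
        ∀ (T : ∀ n, Fin n → Fin (msec n) → Ω n → ℝ),
          (∀ n i j, Measurable (T n i j)) →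
          (∀ n, iIndepFun
            (fun (p : Fin n × Fin (msec n)) ω => T n p.1 p.2 ω) (P n)) →
          (∀ n i j, Measure.map (T n i j) (P n)
              = volume.withDensity (fun x => ENNReal.ofReal (f x))) →
          Tendsto (fun n : ℕ =>
              P n {ω | spacingCount n (msec n) (fun i k => T n i k ω) (hsec n)
                = (n : ℝ) * (msec n - 1)})
            atTop (nhds 1)) := by
  refine ⟨⟨1 / 4, 4, by norm_num, by norm_num, ?_⟩, ?_⟩
  · intro f hf _ hf0 n _ m hm h hh hmh Ω _ P _ T hT _ hlaw
    have hmem : ∀ᵐ ω ∂P, ∀ i k, T i k ω ∈ Set.Icc 0 1 := ae_all_iff.2 fun i => ae_all_iff.2 fun k =>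
      (ae_mem_of_map_eq_withDensity (hT i k).aemeasurable hf hf0 (hlaw i k)).mono
        fun _ => Set.mem_Icc_of_Ioo
    obtain ⟨hlo, hhi⟩ := integral_spacingCount_bounds hT hmem (by omega) hh
    refine ⟨le_trans ?_ hlo, hhi⟩
    have hinv : (1 - 0) / h ≤ m / 4 := by rw [div_le_iff₀ hh]; linarith
    have hm2 : (2 : ℝ) ≤ m := by exact_mod_cast hm
    nlinarith [(n.cast_nonneg : (0 : ℝ) ≤ n)]
  · intro f hf hfc hf0 msec hsec hmsec hpos hgrowth Ω _ P hP T hT hind hlaw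
    refine tendsto_measure_of_measure_compl_le
      (ε := fun n =>
        ENNReal.ofReal (Real.exp (cf - (cf * msec n * hsec n - Real.log (msec n * n))))) ?_ ?_
    · have hexp : Tendsto (fun n => cf - (cf * msec n * hsec n - Real.log (msec n * n)))
          atTop atBot := by
        simpa only [sub_eq_add_neg, Function.comp_def] using
          tendsto_atBot_add_const_left _ cf (tendsto_neg_atTop_atBot.comp hgrowth)
      simpa using ENNReal.tendsto_ofReal (Real.tendsto_exp_atBot.comp hexp)
    · filter_upwards [hmsec.eventually_ge_atTop 2, eventually_gt_atTop 0] with n hm hn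
      exact measure_spacingCount_ne_le_exp hf hcf.le (fun x hx => (hfc x hx).1) hf0 (hT n) (hind n)
        (hlaw n) hn hm (hpos n).le

/-- (a) there are constants `c₁ > 0` and `δ > 0` depending only on
`c_f, C_f` such that `c₁·n·m ≤ E[Ñ_h] ≤ n·(m-1)` whenever `m·h ≥ δ`; (b) if
`m_n → ∞` and `c_f·m_n·h_n - log(m_n·n) → ∞` then `P(Ñ_{h_n} = n·(m_n - 1)) → 1`. -/
theorem statement3 (cf Cf : ℝ) (hcf : 0 < cf) (hcC : cf ≤ Cf) :
    (∃ c₁ δ : ℝ, 0 < c₁ ∧ 0 < δ ∧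
      ∀ (f : ℝ → ℝ), Measurable f →
        (∀ x ∈ Set.Ioo (0 : ℝ) 1, cf ≤ f x ∧ f x ≤ Cf) →
        (∀ x, x ∉ Set.Ioo (0 : ℝ) 1 → f x = 0) →
        ∀ (n : ℕ), 1 ≤ n → ∀ (m : ℕ), 2 ≤ m → ∀ (h : ℝ), 0 < h → δ ≤ (m : ℝ) * h →
        ∀ (Ω : Type) (_ : MeasurableSpace Ω) (P : Measure Ω), IsProbabilityMeasure P →
        ∀ (T : Fin n → Fin m → Ω → ℝ),
          (∀ i j, Measurable (T i j)) →
          iIndepFun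
            (fun (p : Fin n × Fin m) ω => T p.1 p.2 ω) P →
          (∀ i j, Measure.map (T i j) P
              = volume.withDensity (fun x => ENNReal.ofReal (f x))) →
          c₁ * n * m ≤ ∫ ω, spacingCount n m (fun i k => T i k ω) h ∂P ∧
            ∫ ω, spacingCount n m (fun i k => T i k ω) h ∂P ≤ (n : ℝ) * (m - 1)) ∧
    (∀ (f : ℝ → ℝ), Measurable f →
        (∀ x ∈ Set.Ioo (0 : ℝ) 1, cf ≤ f x ∧ f x ≤ Cf) →
        (∀ x, x ∉ Set.Ioo (0 : ℝ) 1 → f x = 0) →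
        ∀ (msec : ℕ → ℕ) (hsec : ℕ → ℝ),
        Tendsto msec atTop atTop → (∀ n, 0 < hsec n) →
        Tendsto (fun n : ℕ => cf * msec n * hsec n - Real.log (msec n * n)) atTop atTop →
        ∀ (Ω : ℕ → Type) (_ : ∀ n, MeasurableSpace (Ω n)) (P : ∀ n, Measure (Ω n)),
        (∀ n, IsProbabilityMeasure (P n)) →
        ∀ (T : ∀ n, Fin n → Fin (msec n) → Ω n → ℝ),
          (∀ n i j, Measurable (T n i j)) →
          (∀ n, iIndepFun
            (fun (p : Fin n × Fin (msec n)) ω => T n p.1 p.2 ω) (P n)) →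
          (∀ n i j, Measure.map (T n i j) (P n)
              = volume.withDensity (fun x => ENNReal.ofReal (f x))) →
          Tendsto (fun n : ℕ =>
              P n {ω | spacingCount n (msec n) (fun i k => T n i k ω) (hsec n)
                = (n : ℝ) * (msec n - 1)})
            atTop (nhds 1)) :=
  statement3_general cf Cf hcf
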